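/- arXiv:1908.02518 — 3 statements merged into one kernel-verified Lean document; each statement's English description precedes it below -/
import Mathlib

section
/- Let X be a finite metric space with a linear order on its points, and let ≤ be the lexicographically refined Vietoris–Rips order on the nonempty subsets of X. (i) If τ is a cofacet of σ with diam τ = diam σ, then τ is the minimum, with respect to ≤, among all cofacets of σ if and only if τ is the colexicographically greatest among the cofacets of σ having diameter equal to diam σ. (ii) If σ is a facet of τ with diam σ = diam τ, then σ is the maximum, with respect to ≤, among all facets of τ if and only if σ is the colexicographically least among the facets of τ having diameter equal to diam τ. -/
/-!
All cofacets of `σ` have the same cardinality and diameter at least `diam σ`; all facets of `τ`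
have the same cardinality and diameter at most `diam τ`. Hence a cofacet (facet) of the extremal
diameter is compared with every other one either by diameter, where it wins outright, or, at equal
diameter, by the colexicographic tie-break alone.
-/

/-- The diameter of a finite subset of a metric space. -/
noncomputable def fdiam {X : Type*} [MetricSpace X] (S : Finset X) : ℝ :=
  Metric.diam (S : Set X)

/-- The lexicographically refined Vietoris–Rips order on subsets of a finite
linearly ordered metric space: by diameter, then by dimension (cardinality),
then by reverse colexicographic vertex order. -/
def ripsLe {X : Type*} [MetricSpace X] [LinearOrder X] (σ τ : Finset X) : Prop :=
  σ = τ ∨ fdiam σ < fdiam τ ∨ (fdiam σ = fdiam τ ∧ (σ.card < τ.card ∨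
    (σ.card = τ.card ∧ toColex τ < toColex σ)))

lemma fdiam_mono {X : Type*} [MetricSpace X] {s t : Finset X} (h : s ⊆ t) :
    fdiam s ≤ fdiam t :=
  Metric.diam_mono (Finset.coe_subset.mpr h) t.finite_toSet.isBounded

section RipsOrder

variable {X : Type*} [MetricSpace X] [LinearOrder X] {σ τ : Finset X}

lemma ripsLe_iff_of_card_eq (h : σ.card = τ.card) :
    ripsLe σ τ ↔ fdiam σ < fdiam τ ∨ fdiam σ = fdiam τ ∧ toColex τ ≤ toColex σ := by
  unfold ripsLe
  constructor
  · rintro (rfl | hlt | ⟨heq, hcard | ⟨-, hcolex⟩⟩)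
    · exact Or.inr ⟨rfl, le_rfl⟩
    · exact Or.inl hlt
    · exact absurd h hcard.ne
    · exact Or.inr ⟨heq, hcolex.le⟩
  · rintro (hlt | ⟨heq, hcolex⟩)
    · exact Or.inr (Or.inl hlt)
    · rcases hcolex.lt_or_eq with hlt | hcolex_eq
      · exact Or.inr (Or.inr ⟨heq, Or.inr ⟨h, hlt⟩⟩)
      · exact Or.inl (toColex_inj.mp hcolex_eq).symm

lemma ripsLe_iff_of_card_eq_of_fdiam_le (h : σ.card = τ.card) (hd : fdiam σ ≤ fdiam τ) :
    ripsLe σ τ ↔ (fdiam σ = fdiam τ → toColex τ ≤ toColex σ) := by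
  rw [ripsLe_iff_of_card_eq h]
  rcases hd.lt_or_eq with hlt | heq
  · simp only [hlt, hlt.ne, true_or, false_imp_iff]
  · simp only [heq, lt_irrefl, true_and, false_or, forall_const]

end RipsOrder

theorem stmt9_general {X : Type*} [MetricSpace X] [LinearOrder X] :
    (∀ σ τ : Finset X, σ.Nonempty → σ ⊆ τ → τ.card = σ.card + 1 →
      fdiam τ = fdiam σ →
      ((∀ τ' : Finset X, σ ⊆ τ' → τ'.card = σ.card + 1 → ripsLe τ τ') ↔
       (∀ τ' : Finset X, σ ⊆ τ' → τ'.card = σ.card + 1 → fdiam τ' = fdiam σ →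
          toColex τ' ≤ toColex τ))) ∧
    (∀ σ τ : Finset X, σ.Nonempty → σ ⊆ τ → τ.card = σ.card + 1 →
      fdiam σ = fdiam τ →
      ((∀ σ' : Finset X, σ'.Nonempty → σ' ⊆ τ → τ.card = σ'.card + 1 → ripsLe σ' σ) ↔
       (∀ σ' : Finset X, σ'.Nonempty → σ' ⊆ τ → τ.card = σ'.card + 1 →
          fdiam σ' = fdiam τ →
          toColex σ ≤ toColex σ'))) := by
  refine ⟨fun σ τ _ _ hcard hd => ?_, fun σ τ _ _ hcard hd => ?_⟩
  · refine forall_congr' fun τ' => forall_congr' fun hsub => forall_congr' fun hc => ?_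
    rw [ripsLe_iff_of_card_eq_of_fdiam_le (by omega) (hd ▸ fdiam_mono hsub), hd, eq_comm]
  · refine forall_congr' fun σ' => forall_congr' fun _ => forall_congr' fun hsub =>
      forall_congr' fun hc => ?_
    rw [ripsLe_iff_of_card_eq_of_fdiam_le (by omega) (hd ▸ fdiam_mono hsub), hd]

/-- (i) A cofacet `τ` of `σ` with `diam τ = diam σ` is the minimum cofacet of
`σ` in the lexicographically refined Vietoris–Rips order iff it is the
colexicographically greatest cofacet of `σ` with diameter `diam σ`.
(ii) A facet `σ` of `τ` with `diam σ = diam τ` is the maximum facet of `τ` in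
that order iff it is the colexicographically least facet of `τ` with diameter
`diam τ`. -/
theorem stmt9 {X : Type*} [Fintype X] [MetricSpace X] [LinearOrder X] :
    (∀ σ τ : Finset X, σ.Nonempty → σ ⊆ τ → τ.card = σ.card + 1 →
      fdiam τ = fdiam σ →
      ((∀ τ' : Finset X, σ ⊆ τ' → τ'.card = σ.card + 1 → ripsLe τ τ') ↔
       (∀ τ' : Finset X, σ ⊆ τ' → τ'.card = σ.card + 1 → fdiam τ' = fdiam σ →
          toColex τ' ≤ toColex τ))) ∧
    (∀ σ τ : Finset X, σ.Nonempty → σ ⊆ τ → τ.card = σ.card + 1 →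
      fdiam σ = fdiam τ →
      ((∀ σ' : Finset X, σ'.Nonempty → σ' ⊆ τ → τ.card = σ'.card + 1 → ripsLe σ' σ) ↔
       (∀ σ' : Finset X, σ'.Nonempty → σ' ⊆ τ → τ.card = σ'.card + 1 →
          fdiam σ' = fdiam τ →
          toColex σ ≤ toColex σ'))) :=
  stmt9_general
end

section
/- Let X be a finite metric space and ≤ a linear order on the nonempty subsets of X extending the face relation (σ ⊆ τ implies σ ≤ τ) and refining the diameter order (diam σ < diam τ implies σ < τ). If τ ⊆ X is a subset with |τ| ≥ 3 and σ is the maximum, with respect to ≤, among the facets of τ, then diam σ = diam τ. -/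
theorem IsCompact.exists_dist_eq_diam {X : Type*} [PseudoMetricSpace X] {s : Set X}
    (hs : IsCompact s) (hne : s.Nonempty) : ∃ x ∈ s, ∃ y ∈ s, Metric.diam s = dist x y := by
  obtain ⟨⟨x, y⟩, ⟨hx, hy⟩, hmax⟩ :=
    (hs.prod hs).exists_isMaxOn (hne.prod hne) continuous_dist.continuousOn
  refine ⟨x, hx, y, hy, le_antisymm ?_ (Metric.dist_le_diam_of_mem hs.isBounded hx hy)⟩
  exact Metric.diam_le_of_forall_dist_le dist_nonneg fun a ha b hb => hmax (Set.mk_mem_prod ha hb)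

section fdiam

variable {X : Type*} [MetricSpace X]

theorem fdiam_mono_s10 {S T : Finset X} (h : S ⊆ T) : fdiam S ≤ fdiam T :=
  Metric.diam_mono (by exact_mod_cast h) T.finite_toSet.isBounded

theorem exists_facet_fdiam_eq [DecidableEq X] {τ : Finset X} (hτ : 3 ≤ τ.card) :
    ∃ σ ⊆ τ, σ.Nonempty ∧ τ.card = σ.card + 1 ∧ fdiam σ = fdiam τ := by
  obtain ⟨x, hx, y, hy, hxy⟩ :=
    τ.finite_toSet.isCompact.exists_dist_eq_diam (Finset.card_pos.mp (by omega))
  obtain ⟨z, hz, hzy⟩ := Finset.exists_mem_ne (s := τ.erase x)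
    (by rw [Finset.card_erase_of_mem hx]; omega) y
  obtain ⟨hzx, hz⟩ := Finset.mem_erase.mp hz
  have hxσ : x ∈ τ.erase z := Finset.mem_erase.mpr ⟨hzx.symm, hx⟩
  have hyσ : y ∈ τ.erase z := Finset.mem_erase.mpr ⟨hzy.symm, hy⟩
  refine ⟨τ.erase z, τ.erase_subset z, ⟨x, hxσ⟩, (Finset.card_erase_add_one hz).symm, ?_⟩
  refine le_antisymm (fdiam_mono_s10 (τ.erase_subset z)) ?_
  rw [fdiam, hxy]
  exact Metric.dist_le_diam_of_mem (τ.erase z).finite_toSet.isBounded hxσ hyσ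

end fdiam

theorem stmt10_general {X : Type*} [MetricSpace X]
    (le : Finset X → Finset X → Prop)
    (hdiam : ∀ σ τ : Finset X, σ.Nonempty → τ.Nonempty →
      fdiam σ < fdiam τ → le σ τ ∧ ¬ le τ σ)
    (τ σ : Finset X) (hτ : 3 ≤ τ.card) (hσ : σ.Nonempty)
    (hfacet : σ ⊆ τ ∧ τ.card = σ.card + 1)
    (hmax : ∀ σ' : Finset X, σ'.Nonempty → σ' ⊆ τ → τ.card = σ'.card + 1 → le σ' σ) :
    fdiam σ = fdiam τ := by
  classical
  obtain ⟨σ', hσ'τ, hσ', hcard, hσ'diam⟩ := exists_facet_fdiam_eq hτ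
  have hσ'σ : fdiam σ' ≤ fdiam σ :=
    not_lt.mp fun hlt => (hdiam σ σ' hσ hσ' hlt).2 (hmax σ' hσ' hσ'τ hcard)
  exact le_antisymm (fdiam_mono_s10 hfacet.1) (hσ'diam ▸ hσ'σ)

/-- In a simplexwise refinement of the Vietoris–Rips filtration (a linear order
on the nonempty subsets of a finite metric space extending the face relation
and refining the diameter order), if `|τ| ≥ 3` and `σ` is the maximum facet of
`τ`, then `diam σ = diam τ`. -/
theorem stmt10 {X : Type*} [Fintype X] [MetricSpace X]
    (le : Finset X → Finset X → Prop)
    (hrefl : ∀ σ : Finset X, σ.Nonempty → le σ σ)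
    (htrans : ∀ σ τ ρ : Finset X, σ.Nonempty → τ.Nonempty → ρ.Nonempty →
      le σ τ → le τ ρ → le σ ρ)
    (hantisymm : ∀ σ τ : Finset X, σ.Nonempty → τ.Nonempty → le σ τ → le τ σ → σ = τ)
    (htotal : ∀ σ τ : Finset X, σ.Nonempty → τ.Nonempty → le σ τ ∨ le τ σ)
    (hface : ∀ σ τ : Finset X, σ.Nonempty → τ.Nonempty → σ ⊆ τ → le σ τ)
    (hdiam : ∀ σ τ : Finset X, σ.Nonempty → τ.Nonempty →
      fdiam σ < fdiam τ → le σ τ ∧ ¬ le τ σ)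
    (τ σ : Finset X) (hτ : 3 ≤ τ.card) (hσ : σ.Nonempty)
    (hfacet : σ ⊆ τ ∧ τ.card = σ.card + 1)
    (hmax : ∀ σ' : Finset X, σ'.Nonempty → σ' ⊆ τ → τ.card = σ'.card + 1 → le σ' σ) :
    fdiam σ = fdiam τ :=
  stmt10_general le hdiam τ σ hτ hσ hfacet hmax
end

section
/- Let D be an I × J matrix over a field, where I and J are finite linearly ordered index sets. Suppose V and W are regular upper triangular J × J matrices such that both R = D·V and R′ = D·W are reduced. Then for every j ∈ J, the column R_j is zero if and only if R′_j is zero, and if both are nonzero then they have the same pivot index. -/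
/-!
Write `R = D·V`, `R′ = D·W` and `U = V⁻¹·W`, so that `R′ = R·U` with `U` upper triangular
with nonzero diagonal. Column `j` of `R′` is the combination `∑_{k ≤ j} U_{kj} R_k`; since the
nonzero columns of `R` have distinct pivots, its pivot is the largest pivot of a column `R_k`
occurring in it. By induction on `j`, that column is `R_j` itself: if it were `R_k` with `k < j`,
then `R′_k` would already carry the same pivot, contradicting that `R′` is reduced. Hence the
pivot of `R_j` is the pivot of `R′_j`, and exchanging `V` and `W` gives the converse.
-/

/-- `i` is the pivot index of the column vector `v`: the largest index carrying
a nonzero entry (in particular `v ≠ 0`). -/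
def IsPivot {I F : Type*} [LinearOrder I] [Zero F] (v : I → F) (i : I) : Prop :=
  v i ≠ 0 ∧ ∀ i', v i' ≠ 0 → i' ≤ i

/-- A matrix is reduced if no two of its nonzero columns have the same pivot index. -/
def ReducedMat {I J F : Type*} [LinearOrder I] [Zero F] (M : Matrix I J F) : Prop :=
  ∀ j₁ j₂ i, IsPivot (fun r => M r j₁) i → IsPivot (fun r => M r j₂) i → j₁ = j₂

open Matrix

section Pivot

variable {I F : Type*} [LinearOrder I]

lemma IsPivot.unique [Zero F] {v : I → F} {i i' : I} (h : IsPivot v i) (h' : IsPivot v i') :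
    i = i' :=
  le_antisymm (h'.2 i h.1) (h.2 i' h'.1)

lemma exists_isPivot_iff_ne_zero [Zero F] [Fintype I] {v : I → F} :
    (∃ i, IsPivot v i) ↔ v ≠ 0 := by
  classical
  refine ⟨fun ⟨i, hi⟩ hv => hi.1 (congrFun hv i), fun hv => ?_⟩
  obtain ⟨i, hi⟩ := Function.ne_iff.mp hv
  have hS : (Finset.univ.filter (v · ≠ 0)).Nonempty := ⟨i, by simpa using hi⟩
  refine ⟨_, (Finset.mem_filter.mp (Finset.max'_mem _ hS)).2, fun i' hi' => ?_⟩
  exact Finset.le_max' _ i' (by simpa using hi')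

end Pivot

lemma Matrix.exists_ne_zero_of_mulVec_ne_zero {I J F : Type*} [Fintype J]
    [NonUnitalNonAssocSemiring F] {M : Matrix I J F} {c : J → F} {i : I}
    (h : (M *ᵥ c) i ≠ 0) : ∃ k, M i k ≠ 0 ∧ c k ≠ 0 := by
  obtain ⟨k, -, hk⟩ := Finset.exists_ne_zero_of_sum_ne_zero h
  exact ⟨k, left_ne_zero_of_mul hk, right_ne_zero_of_mul hk⟩

lemma Matrix.IsUpperTriangular.diag_ne_zero {J F : Type*} [CommRing F] [Nontrivial F]
    [Fintype J] [LinearOrder J] [DecidableEq J] {U : Matrix J J F} (hU : U.IsUpperTriangular)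
    (hunit : IsUnit U) (j : J) : U j j ≠ 0 := by
  have hdet : U.det ≠ 0 := ((isUnit_iff_isUnit_det U).mp hunit).ne_zero
  rw [det_of_isUpperTriangular hU] at hdet
  exact fun hj => hdet (Finset.prod_eq_zero (Finset.mem_univ j) hj)

section Reduced

variable {I J F : Type*} [LinearOrder I] [Fintype I] [Fintype J]

lemma ReducedMat.exists_isPivot_mulVec [Semiring F] [NoZeroDivisors F] {R : Matrix I J F}
    (hR : ReducedMat R) {c : J → F} (h : ∃ i k, R i k ≠ 0 ∧ c k ≠ 0) :
    ∃ k i, c k ≠ 0 ∧ IsPivot (fun r => R r k) i ∧ IsPivot (R *ᵥ c) i := by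
  classical
  set S := Finset.univ.filter (fun i => ∃ k, R i k ≠ 0 ∧ c k ≠ 0) with hS
  have memS : ∀ {i k}, R i k ≠ 0 → c k ≠ 0 → i ∈ S := fun hRik hc => by
    simpa [hS] using ⟨_, hRik, hc⟩
  obtain ⟨i, k, hik⟩ := h
  have hSne : S.Nonempty := ⟨i, memS hik.1 hik.2⟩
  set i₀ := S.max' hSne
  have pivot_of_ne_zero : ∀ {k}, c k ≠ 0 → R i₀ k ≠ 0 → IsPivot (fun r => R r k) i₀ :=
    fun hc hRk => ⟨hRk, fun i' hi' => S.le_max' i' (memS hi' hc)⟩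
  obtain ⟨k₀, hRk₀, hck₀⟩ := (Finset.mem_filter.mp (S.max'_mem hSne)).2
  have hk₀ := pivot_of_ne_zero hck₀ hRk₀
  -- every other column `k` with `R i₀ k * c k ≠ 0` would also have pivot `i₀`
  have hval : (R *ᵥ c) i₀ = R i₀ k₀ * c k₀ := by
    refine Finset.sum_eq_single k₀ (fun k _ hk => ?_) (by simp)
    by_contra hne
    exact hk (hR k k₀ i₀ (pivot_of_ne_zero (right_ne_zero_of_mul hne)
      (left_ne_zero_of_mul hne)) hk₀)
  refine ⟨k₀, i₀, hck₀, hk₀, by rw [hval]; exact mul_ne_zero hRk₀ hck₀, fun i' hi' => ?_⟩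
  obtain ⟨k, hRk, hck⟩ := exists_ne_zero_of_mulVec_ne_zero hi'
  exact S.le_max' i' (memS hRk hck)

variable [LinearOrder J]

lemma ReducedMat.isPivot_mul [Semiring F] [NoZeroDivisors F] {R : Matrix I J F}
    {U : Matrix J J F} (hR : ReducedMat R) (hRU : ReducedMat (R * U)) (hU : U.IsUpperTriangular)
    (hdiag : ∀ j, U j j ≠ 0) (j : J) {i : I} (h : IsPivot (fun r => R r j) i) :
    IsPivot (fun r => (R * U) r j) i := by
  induction j using WellFoundedLT.induction generalizing i with
  | _ j ih =>
  obtain ⟨k, i₀, hUk, hk, hRUj⟩ :=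
    hR.exists_isPivot_mulVec (c := fun k => U k j) ⟨i, j, h.1, hdiag j⟩
  have hkj : k = j := by
    refine (le_of_not_gt fun hjk => hUk (hU hjk)).eq_or_lt.resolve_right fun hkj => ?_
    exact hkj.ne (hRU k j i₀ (ih k hkj hk) hRUj)
  subst hkj
  rwa [h.unique hk]

lemma isPivot_mul_of_isPivot_mul [CommRing F] [IsDomain F] [DecidableEq J] {D : Matrix I J F}
    {V W : Matrix J J F} (hV : IsUnit V) (hW : IsUnit W) (hVut : V.IsUpperTriangular)
    (hWut : W.IsUpperTriangular) (hRV : ReducedMat (D * V)) (hRW : ReducedMat (D * W)) (j : J)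
    {i : I} (h : IsPivot (fun r => (D * V) r j) i) : IsPivot (fun r => (D * W) r j) i := by
  have : Invertible V := hV.invertible
  have hU : (V⁻¹ * W).IsUpperTriangular := (blockTriangular_inv_of_blockTriangular hVut).mul hWut
  have hUunit : IsUnit (V⁻¹ * W) := (isUnit_nonsing_inv_iff.mpr hV).mul hW
  have hDVU : D * V * (V⁻¹ * W) = D * W := by
    rw [Matrix.mul_assoc, mul_nonsing_inv_cancel_left _ _ ((isUnit_iff_isUnit_det V).mp hV)]
  simpa only [hDVU] using hRV.isPivot_mul (hDVU ▸ hRW) hU (hU.diag_ne_zero hUunit) j h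

end Reduced

/-- Uniqueness of the persistence pairing: if `V` and `W` are regular upper
triangular matrices such that `R = D·V` and `R′ = D·W` are both reduced, then
for every column index `j`, `R_j = 0` iff `R′_j = 0`, and if both are nonzero
they have the same pivot index. -/
theorem stmt13 {F I J : Type*} [Field F] [Fintype I] [Fintype J]
    [LinearOrder I] [LinearOrder J] [DecidableEq J]
    (D : Matrix I J F)
    (V W : Matrix J J F) (hV : IsUnit V) (hW : IsUnit W)
    (hVut : ∀ j₁ j₂ : J, j₂ < j₁ → V j₁ j₂ = 0)
    (hWut : ∀ j₁ j₂ : J, j₂ < j₁ → W j₁ j₂ = 0)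
    (hRV : ReducedMat (D * V)) (hRW : ReducedMat (D * W)) :
    ∀ j : J,
      ((fun r => (D * V) r j) = 0 ↔ (fun r => (D * W) r j) = 0) ∧
      (∀ i i' : I, IsPivot (fun r => (D * V) r j) i →
        IsPivot (fun r => (D * W) r j) i' → i = i') := by
  have hVW := isPivot_mul_of_isPivot_mul hV hW (fun _ _ h => hVut _ _ h)
    (fun _ _ h => hWut _ _ h) hRV hRW
  have hWV := isPivot_mul_of_isPivot_mul hW hV (fun _ _ h => hWut _ _ h)
    (fun _ _ h => hVut _ _ h) hRW hRV
  intro j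
  refine ⟨?_, fun i i' h h' => (hVW j h).unique h'⟩
  rw [← not_iff_not, ← ne_eq, ← ne_eq, ← exists_isPivot_iff_ne_zero,
    ← exists_isPivot_iff_ne_zero]
  exact ⟨fun ⟨i, h⟩ => ⟨i, hVW j h⟩, fun ⟨i, h⟩ => ⟨i, hWV j h⟩⟩
end
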